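/- arXiv:1907.08086 — 4 statements merged into one kernel-verified Lean document; each statement's English description precedes it below -/
import Mathlib

section
/- Let r ≥ 3 be an integer divisible by 3 and let G be a 3-uniform hypergraph with G → (P⁽³⁾ₙ)₂. Let G′ be the r-uniform hypergraph obtained from G by replacing every vertex v of G by a set S(v) of r/3 new vertices (the sets S(v) pairwise disjoint), where for each edge {u,v,w} of G the set S(u) ∪ S(v) ∪ S(w) is an edge of G′ and these are all the edges of G′. Then |E(G′)| = |E(G)| and G′ → (P⁽ʳ⁾_{rn/3, 2r/3})₂. -/
/-
Blow every vertex `v` up to the block `{v} × Fin m`, and read a path `f` of the original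
hypergraph in blocks: the `k`-th vertex of the blown-up path is the `(k % m)`-th copy of
`f (k / m)`. Then the `j`-th edge of the blown-up path is exactly the blow-up of the `j`-th
edge of `f`, so colouring each edge of `G` by the colour of its blow-up turns a monochromatic
copy of `P⁽ʳ⁾_{n, r-s}` in `G` into one of `P⁽ʳᵐ⁾_{mn, (r-s)m}` in `G'`.
-/

/-- Under the 2-colouring `c`, the `r`-uniform hypergraph on vertex type `V` with edge
set `E` contains a monochromatic copy of the `r`-uniform `(r - s)`-path on `n` vertices
(consecutive edges start at distance `s`, hence share `r - s` vertices). -/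
def HasMonoPathCopy {V : Type} [DecidableEq V] (r s : ℕ) (E : Finset (Finset V))
    (c : Finset V → Bool) (n : ℕ) : Prop :=
  ∃ (f : ℕ → V) (b : Bool), Set.InjOn f (Set.Iio n) ∧
    ∀ j, j * s + r ≤ n →
      ((Finset.range r).image (fun i => f (j * s + i)) ∈ E ∧
        c ((Finset.range r).image (fun i => f (j * s + i))) = b)

/-- `E` arrows the `r`-uniform `(r - s)`-path on `n` vertices with two colours.
For `r = 3`, `s = 1` this is the 3-uniform tight path `P⁽³⁾ₙ`. -/
def ArrowsPath {V : Type} [DecidableEq V] (r s : ℕ) (E : Finset (Finset V)) (n : ℕ) :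
    Prop :=
  ∀ c : Finset V → Bool, HasMonoPathCopy r s E c n

open Finset

def blowup {V : Type} [DecidableEq V] (E : Finset (Finset V)) (m : ℕ) :
    Finset (Finset (V × Fin m)) :=
  E.image (· ×ˢ (univ : Finset (Fin m)))

theorem Finset.product_univ_injective {V W : Type} [Fintype W] [Nonempty W] :
    Function.Injective (fun e : Finset V => e ×ˢ (univ : Finset W)) := by
  intro e e' h
  ext x
  simpa using Finset.ext_iff.mp h (x, Classical.arbitrary W)

theorem card_blowup {V : Type} [DecidableEq V] (E : Finset (Finset V)) {m : ℕ} (hm : 0 < m) :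
    (blowup E m).card = E.card :=
  have : Nonempty (Fin m) := ⟨⟨0, hm⟩⟩
  card_image_of_injective E product_univ_injective

def blowupPath {V : Type} (f : ℕ → V) (m : ℕ) [NeZero m] (k : ℕ) : V × Fin m :=
  (f (k / m), Fin.ofNat m k)

section

variable {V : Type} {m : ℕ} [NeZero m]

theorem blowupPath_injOn {f : ℕ → V} {n : ℕ} (hf : Set.InjOn f (Set.Iio n)) :
    Set.InjOn (blowupPath f m) (Set.Iio (m * n)) := by
  have hdiv : ∀ k ∈ Set.Iio (m * n), k / m ∈ Set.Iio n := fun k hk =>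
    Nat.div_lt_of_lt_mul hk
  intro k hk k' hk' h
  simp only [blowupPath, Prod.mk.injEq, Fin.ext_iff, Fin.val_ofNat] at h
  have hq : k / m = k' / m := hf (hdiv k hk) (hdiv k' hk') h.1
  rw [← Nat.div_add_mod k m, ← Nat.div_add_mod k' m, hq, h.2]

theorem image_range_blowupPath [DecidableEq V] (f : ℕ → V) (r a : ℕ) :
    (range (r * m)).image (fun k => blowupPath f m (a * m + k)) =
      (range r).image (fun i => f (a + i)) ×ˢ (univ : Finset (Fin m)) := by
  have hm : 0 < m := Nat.pos_of_neZero m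
  ext ⟨x, t⟩
  simp only [blowupPath, mem_image, mem_range, mem_product, mem_univ, and_true,
    Prod.mk.injEq]
  constructor
  · rintro ⟨k, hk, hx, -⟩
    refine ⟨k / m, Nat.div_lt_of_lt_mul (by rwa [mul_comm]), ?_⟩
    rwa [add_comm (a * m), Nat.add_mul_div_right _ _ hm, add_comm] at hx
  · rintro ⟨i, hi, rfl⟩
    have hblock : (a * m + (i * m + t)) / m = a + i := by
      rw [← add_assoc, ← add_mul, add_comm, Nat.add_mul_div_right _ _ hm,
        Nat.div_eq_of_lt t.isLt, zero_add]
    refine ⟨i * m + t, ?_, by rw [hblock], ?_⟩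
    · calc i * m + t < (i + 1) * m := by rw [add_mul, one_mul]; omega
        _ ≤ r * m := Nat.mul_le_mul_right m hi
    · ext
      rw [Fin.val_ofNat, ← add_assoc, ← add_mul, add_comm, Nat.add_mul_mod_self_right,
        Nat.mod_eq_of_lt t.isLt]

end

theorem ArrowsPath.blowup {V : Type} [DecidableEq V] {r s n : ℕ} {E : Finset (Finset V)}
    (hE : ArrowsPath r s E n) {m : ℕ} (hm : 0 < m) :
    ArrowsPath (r * m) (s * m) (blowup E m) (m * n) := by
  have : NeZero m := ⟨hm.ne'⟩
  intro c
  obtain ⟨f, b, hinj, hpath⟩ := hE (fun e => c (e ×ˢ univ))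
  refine ⟨blowupPath f m, b, blowupPath_injOn hinj, fun j hj => ?_⟩
  have hj' : j * s + r ≤ n := by
    refine Nat.le_of_mul_le_mul_right ?_ hm
    rw [add_mul, mul_assoc, mul_comm n]
    exact mul_comm n m ▸ hj
  rw [← mul_assoc, image_range_blowupPath]
  exact ⟨mem_image_of_mem _ (hpath j hj').1, (hpath j hj').2⟩

theorem blowup_arrows_general (r : ℕ) (hr : 3 ≤ r) (hr3 : 3 ∣ r) (n : ℕ)
    (E : Finset (Finset ℕ))
    (hG : ArrowsPath 3 1 E n) :
    (E.image (fun e => e ×ˢ (Finset.univ : Finset (Fin (r / 3))))).card = E.card ∧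
    ArrowsPath r (r / 3)
      (E.image (fun e => e ×ˢ (Finset.univ : Finset (Fin (r / 3))))) (r / 3 * n) := by
  obtain ⟨m, rfl⟩ := hr3
  have hm : 0 < m := by omega
  rw [Nat.mul_div_cancel_left m three_pos]
  refine ⟨card_blowup E hm, ?_⟩
  simpa only [blowup, mul_comm 3 m, one_mul] using hG.blowup hm

/-- Let `r ≥ 3` be divisible by `3` and let `G` be a 3-uniform hypergraph (edge set `E`
on vertex type `ℕ`) with `G → (P⁽³⁾ₙ)₂`.  Let `G'` be the `r`-uniform hypergraph obtained
by replacing every vertex `v` by the set `S(v) = {v} × Fin (r/3)` of `r/3` new vertices,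
each edge `{u,v,w}` of `G` becoming the edge `S(u) ∪ S(v) ∪ S(w)` of `G'`.  Then `G'` has
exactly as many edges as `G` and `G' → (P⁽ʳ⁾_{rn/3, 2r/3})₂`, the `r`-uniform
`(2r/3)`-path on `(r/3) * n` vertices. -/
theorem blowup_arrows (r : ℕ) (hr : 3 ≤ r) (hr3 : 3 ∣ r) (n : ℕ)
    (E : Finset (Finset ℕ)) (hE : ∀ e ∈ E, e.card = 3)
    (hG : ArrowsPath 3 1 E n) :
    (E.image (fun e => e ×ˢ (Finset.univ : Finset (Fin (r / 3))))).card = E.card ∧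
    ArrowsPath r (r / 3)
      (E.image (fun e => e ×ˢ (Finset.univ : Finset (Fin (r / 3))))) (r / 3 * n) :=
  blowup_arrows_general r hr hr3 n E hG
end

section
/- For every pair of positive real constants ε and a, there is a constant b such that for every sufficiently large integer n there is a (simple) graph H with exactly ⌈a·n⌉ vertices and maximum degree at most b such that for every pair of disjoint sets S, T ⊆ V(H) with |S| ≥ ε·n and |T| ≥ ε·n there is at least one edge of H with one endpoint in S and the other in T. -/
/-!
Take for `H` the union of `d` permutations `ω₁, …, ω_d` of the `m = ⌈a n⌉` vertices, joining each
`x` to every `ωₖ x`; all degrees are at most `2d`. For fixed `S`, `T` of size `s = ⌈ε n⌉`, a uniform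
random permutation maps `S` into the complement of `T` with probability at most
`(1 - s/m)^s ≤ exp(-s²/m)`, so `d` independent ones all do with probability at most
`exp(-d s²/m) ≤ e^{-3m}` once `d ≥ 12 a²/ε²`. There are at most `4^m` pairs `(S, T)` and
`4^m e^{-3m} < 1`, so some tuple joins every pair. Probabilities are counted as numbers of
permutations.
-/

open Finset
open scoped Nat

section PermCounting

variable {α : Type*} [Fintype α] [DecidableEq α]

theorem card_perm_fixing_pointwise (S : Finset α) :
    #{σ : Equiv.Perm α | ∀ x ∈ S, σ x = x} = (Fintype.card α - #S)! := by
  rw [← Fintype.card_subtype, ← Fintype.card_coe S, ← Fintype.card_subtype_compl,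
    ← Fintype.card_perm]
  refine Fintype.card_congr ((Equiv.subtypeEquivRight fun σ => ?_).trans
    (Equiv.Perm.subtypeEquivSubtypePerm fun a => a ∉ S).symm)
  simp only [not_not]

theorem card_perm_avoiding_le (S T : Finset α) :
    #{σ : Equiv.Perm α | ∀ x ∈ S, σ x ∉ T}
      ≤ (Fintype.card α - #S)! * (Fintype.card α - #T).descFactorial #S := by
  set B := ({σ : Equiv.Perm α | ∀ x ∈ S, σ x ∉ T} : Finset _)
  let restrict (σ : Equiv.Perm α) : S ↪ α := (Function.Embedding.subtype _).trans σ.toEmbedding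
  have fiber : ∀ e ∈ B.image restrict, #{σ ∈ B | restrict σ = e} ≤ (Fintype.card α - #S)! := by
    rintro e he
    obtain ⟨σ₀, -, rfl⟩ := mem_image.1 he
    rw [← card_perm_fixing_pointwise S]
    refine card_le_card_of_injOn (σ₀⁻¹ * ·) (fun σ hσ => ?_) fun σ₁ _ σ₂ _ h => mul_left_cancel h
    rw [mem_coe, mem_filter] at hσ ⊢
    refine ⟨mem_univ _, fun x hx => ?_⟩
    have hσx : σ x = σ₀ x := DFunLike.congr_fun hσ.2 ⟨x, hx⟩
    rw [Equiv.Perm.mul_apply, hσx, Equiv.Perm.inv_eq_iff_eq]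
  have image_card : #(B.image restrict) ≤ (Fintype.card α - #T).descFactorial #S := by
    let corestrict (e : {e : S ↪ α // ∀ x, e x ∉ T}) : S ↪ {y : α // y ∉ T} :=
      ⟨fun x => ⟨e.1 x, e.2 x⟩, fun x y h => e.1.injective (congrArg Subtype.val h)⟩
    have corestrict_inj : Function.Injective corestrict := fun e f h =>
      Subtype.ext <| DFunLike.ext _ _ fun x => congrArg Subtype.val (DFunLike.congr_fun h x)
    calc #(B.image restrict) ≤ #({e : S ↪ α | ∀ x, e x ∉ T} : Finset _) := by
          refine card_le_card fun e he => ?_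
          obtain ⟨σ, hσ, rfl⟩ := mem_image.1 he
          simp only [mem_filter, mem_univ, true_and, B] at hσ ⊢
          exact fun x => hσ x.1 x.2
      _ ≤ Fintype.card (S ↪ {y : α // y ∉ T}) := by
          rw [← Fintype.card_subtype]
          exact Fintype.card_le_of_injective corestrict corestrict_inj
      _ = (Fintype.card α - #T).descFactorial #S := by
          rw [Fintype.card_embedding_eq, Fintype.card_coe, Fintype.card_subtype_compl,
            Fintype.card_coe]
  calc #B ≤ (Fintype.card α - #S)! * #(B.image restrict) := card_le_mul_card_image B _ fiber
    _ ≤ _ := Nat.mul_le_mul_left _ image_card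

theorem exists_perms_forall_exists_apply_mem {ι : Type*} [Fintype ι] [DecidableEq ι] (s : ℕ)
    (h : (Fintype.card α).choose s ^ 2 *
        ((Fintype.card α - s)! * (Fintype.card α - s).descFactorial s) ^ Fintype.card ι
      < (Fintype.card α)! ^ Fintype.card ι) :
    ∃ ω : ι → Equiv.Perm α, ∀ S T : Finset α, s ≤ #S → s ≤ #T → ∃ x ∈ S, ∃ k, ω k x ∈ T := by
  by_contra! bad
  set P := powersetCard s (univ : Finset α) ×ˢ powersetCard s (univ : Finset α)
  let avoiding (p : Finset α × Finset α) : Finset (ι → Equiv.Perm α) :=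
    Fintype.piFinset fun _ => {σ | ∀ x ∈ p.1, σ x ∉ p.2}
  have cover : (univ : Finset (ι → Equiv.Perm α)) ⊆ P.biUnion avoiding := by
    intro ω _
    obtain ⟨S, T, hS, hT, hST⟩ := bad ω
    obtain ⟨S', hS'S, hS'⟩ := exists_subset_card_eq hS
    obtain ⟨T', hT'T, hT'⟩ := exists_subset_card_eq hT
    refine mem_biUnion.2 ⟨(S', T'), by simp [P, mem_powersetCard, hS', hT'], ?_⟩
    refine Fintype.mem_piFinset.2 fun k => mem_filter.2 ⟨mem_univ _, fun x hx hωx => ?_⟩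
    exact hST x (hS'S hx) k (hT'T hωx)
  have avoiding_card : ∀ p ∈ P, #(avoiding p) ≤
      ((Fintype.card α - s)! * (Fintype.card α - s).descFactorial s) ^ Fintype.card ι := by
    intro p hp
    obtain ⟨hp₁, hp₂⟩ := mem_product.1 hp
    rw [Fintype.card_piFinset, prod_const, Finset.card_univ]
    gcongr
    simpa only [(mem_powersetCard.1 hp₁).2, (mem_powersetCard.1 hp₂).2]
      using card_perm_avoiding_le p.1 p.2
  refine h.not_ge ?_
  calc (Fintype.card α)! ^ Fintype.card ι = #(univ : Finset (ι → Equiv.Perm α)) := by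
        rw [Finset.card_univ, Fintype.card_fun, Fintype.card_perm]
    _ ≤ #(P.biUnion avoiding) := card_le_card cover
    _ ≤ #P * _ := card_biUnion_le_card_mul P avoiding _ avoiding_card
    _ = _ := by rw [card_product, card_powersetCard, Finset.card_univ, sq]

end PermCounting

namespace SimpleGraph

variable {ι α : Type*}

def ofPerms (ω : ι → Equiv.Perm α) : SimpleGraph α :=
  fromRel fun x y => ∃ k, ω k x = y

theorem ofPerms_adj_apply {ω : ι → Equiv.Perm α} {x : α} (k : ι) (h : x ≠ ω k x) :
    (ofPerms ω).Adj x (ω k x) :=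
  (fromRel_adj _ _ _).2 ⟨h, Or.inl ⟨k, rfl⟩⟩

theorem ncard_neighborSet_ofPerms_le [Finite ι] (ω : ι → Equiv.Perm α) (v : α) :
    ((ofPerms ω).neighborSet v).ncard ≤ 2 * Nat.card ι := by
  have hsub : (ofPerms ω).neighborSet v ⊆
      Set.range (fun k => ω k v) ∪ Set.range (fun k => (ω k).symm v) := by
    rintro w ⟨-, ⟨k, rfl⟩ | ⟨k, rfl⟩⟩
    · exact Or.inl ⟨k, rfl⟩
    · exact Or.inr ⟨k, (ω k).symm_apply_apply w⟩
  calc ((ofPerms ω).neighborSet v).ncard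
      ≤ (Set.range (fun k => ω k v) ∪ Set.range (fun k => (ω k).symm v)).ncard :=
        Set.ncard_le_ncard hsub ((Set.finite_range _).union (Set.finite_range _))
    _ ≤ (Set.range (fun k => ω k v)).ncard + (Set.range (fun k => (ω k).symm v)).ncard :=
        Set.ncard_union_le _ _
    _ ≤ Nat.card ι + Nat.card ι := by
        simp only [← Nat.card_coe_set_eq]
        exact Nat.add_le_add (Finite.card_range_le _) (Finite.card_range_le _)
    _ = 2 * Nat.card ι := (two_mul _).symm

end SimpleGraph

theorem Nat.descFactorial_mul_pow_le {a b : ℕ} (hab : a ≤ b) (k : ℕ) :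
    a.descFactorial k * b ^ k ≤ b.descFactorial k * a ^ k := by
  rw [descFactorial_eq_prod_range, descFactorial_eq_prod_range, ← card_range k, ← prod_const,
    ← prod_const, card_range, ← prod_mul_distrib, ← prod_mul_distrib]
  refine prod_le_prod' fun i _ => ?_
  rw [Nat.sub_mul, Nat.sub_mul, Nat.mul_comm b a]
  exact Nat.sub_le_sub_left (Nat.mul_le_mul_left i hab) _

theorem factorial_sub_mul_descFactorial_le_exp {m s : ℕ} (hm : 0 < m) (hsm : s ≤ m) :
    (((m - s)! * (m - s).descFactorial s : ℕ) : ℝ) ≤ m ! * Real.exp (-(s ^ 2 / m)) := by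
  have hm' : (0 : ℝ) < m := Nat.cast_pos.2 hm
  have key : (m - s)! * (m - s).descFactorial s * m ^ s ≤ m ! * (m - s) ^ s := by
    rw [← Nat.factorial_mul_descFactorial hsm, mul_assoc, mul_assoc]
    exact Nat.mul_le_mul_left _ (Nat.descFactorial_mul_pow_le (Nat.sub_le m s) s)
  have ratio : (((m - s : ℕ) : ℝ) / m) = 1 - s / m := by
    rw [Nat.cast_sub hsm, sub_div, div_self hm'.ne']
  calc (((m - s)! * (m - s).descFactorial s : ℕ) : ℝ)
      ≤ m ! * (((m - s : ℕ) : ℝ) / m) ^ s := by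
        rw [div_pow, mul_div_assoc', le_div_iff₀ (by positivity)]
        exact_mod_cast key
    _ ≤ m ! * Real.exp (-(s / m)) ^ s := by
        rw [ratio]
        gcongr
        · rw [← ratio]; positivity
        · exact Real.one_sub_le_exp_neg _
    _ = m ! * Real.exp (-(s ^ 2 / m)) := by
        rw [← Real.exp_nat_mul]; ring_nf

theorem choose_sq_mul_pow_lt_factorial_pow {m s d : ℕ} (hm : 0 < m) (h : 3 * m ^ 2 ≤ s ^ 2 * d) :
    m.choose s ^ 2 * ((m - s)! * (m - s).descFactorial s) ^ d < m ! ^ d := by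
  rcases lt_or_ge m s with hms | hsm
  · simp [Nat.choose_eq_zero_of_lt hms, Nat.factorial_pos]
  have hm' : (0 : ℝ) < m := Nat.cast_pos.2 hm
  have exponent : 3 * (m : ℝ) ≤ d * (s ^ 2 / m) := by
    rw [mul_div_assoc', le_div_iff₀ hm']
    exact_mod_cast (by linarith : 3 * m * m ≤ d * s ^ 2)
  have four_lt : (4 : ℝ) < Real.exp 3 := by
    linarith [Real.add_one_lt_exp (by norm_num : (3 : ℝ) ≠ 0)]
  suffices ((m.choose s : ℝ)) ^ 2 * (((m - s)! * (m - s).descFactorial s : ℕ) : ℝ) ^ d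
      < (m ! : ℝ) ^ d by exact_mod_cast this
  calc ((m.choose s : ℝ)) ^ 2 * (((m - s)! * (m - s).descFactorial s : ℕ) : ℝ) ^ d
      ≤ ((2 : ℝ) ^ m) ^ 2 * (m ! * Real.exp (-(s ^ 2 / m))) ^ d := by
        gcongr
        · exact_mod_cast Nat.choose_le_two_pow m s
        · exact factorial_sub_mul_descFactorial_le_exp hm hsm
    _ = (m ! : ℝ) ^ d * (4 ^ m * Real.exp (-(d * (s ^ 2 / m)))) := by
        rw [mul_pow, ← Real.exp_nat_mul, ← pow_mul, mul_comm m 2, pow_mul]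
        ring_nf
    _ ≤ (m ! : ℝ) ^ d * (4 / Real.exp 3) ^ m := by
        rw [div_pow, ← Real.exp_nat_mul, div_eq_mul_inv _ (Real.exp _), ← Real.exp_neg]
        gcongr _ * (_ * Real.exp ?_)
        linarith
    _ < (m ! : ℝ) ^ d := by
        refine mul_lt_of_lt_one_right (by positivity) (pow_lt_one₀ (by positivity) ?_ hm.ne')
        exact (div_lt_one (Real.exp_pos 3)).2 four_lt

theorem three_mul_ceil_sq_le_ceil_sq_mul_ceil {ε a : ℝ} (hε : 0 < ε) (ha : 0 < a) {n : ℕ}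
    (hn : 1 / a ≤ n) : 3 * ⌈a * n⌉₊ ^ 2 ≤ ⌈ε * n⌉₊ ^ 2 * ⌈12 * a ^ 2 / ε ^ 2⌉₊ := by
  have han : 1 ≤ a * n := by rwa [div_le_iff₀' ha] at hn
  have hm : (⌈a * n⌉₊ : ℝ) ≤ 2 * (a * n) := (Nat.ceil_lt_add_one (by positivity)).le.trans
    (by linarith)
  have hs : ε * n ≤ ⌈ε * n⌉₊ := Nat.le_ceil _
  have hd : 12 * a ^ 2 / ε ^ 2 ≤ ⌈12 * a ^ 2 / ε ^ 2⌉₊ := Nat.le_ceil _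
  suffices (3 * ⌈a * n⌉₊ ^ 2 : ℝ) ≤ ⌈ε * n⌉₊ ^ 2 * ⌈12 * a ^ 2 / ε ^ 2⌉₊ by
    exact_mod_cast this
  calc (3 * ⌈a * n⌉₊ ^ 2 : ℝ) ≤ 3 * (2 * (a * n)) ^ 2 := by gcongr
    _ = (ε * n) ^ 2 * (12 * a ^ 2 / ε ^ 2) := by field_simp; ring
    _ ≤ ⌈ε * n⌉₊ ^ 2 * ⌈12 * a ^ 2 / ε ^ 2⌉₊ := by gcongr

/-- For every pair of positive real constants `ε` and `a` there is a constant `b` such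
that for every sufficiently large `n` there is a graph `H` on exactly `⌈a * n⌉` vertices
with maximum degree at most `b` such that any two disjoint vertex sets `S`, `T` of size
at least `ε * n` each are joined by at least one edge. -/
theorem sparse_graph_with_crossing_edges (ε a : ℝ) (hε : 0 < ε) (ha : 0 < a) :
    ∃ b : ℕ, ∃ N : ℕ, ∀ n : ℕ, N ≤ n →
      ∃ H : SimpleGraph (Fin ⌈a * n⌉₊),
        (∀ v, (H.neighborSet v).ncard ≤ b) ∧
        ∀ S T : Finset (Fin ⌈a * n⌉₊), Disjoint S T →
          ε * n ≤ (S.card : ℝ) → ε * n ≤ (T.card : ℝ) →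
          ∃ s ∈ S, ∃ t ∈ T, H.Adj s t := by
  set d := ⌈12 * a ^ 2 / ε ^ 2⌉₊
  refine ⟨2 * d, ⌈1 / a⌉₊, fun n hn => ?_⟩
  have hna : 1 / a ≤ n := Nat.ceil_le.1 hn
  have hm : 0 < ⌈a * n⌉₊ := Nat.ceil_pos.2 (mul_pos ha ((one_div_pos.2 ha).trans_le hna))
  obtain ⟨ω, hω⟩ :=
      exists_perms_forall_exists_apply_mem (α := Fin ⌈a * n⌉₊) (ι := Fin d) ⌈ε * n⌉₊ <| by
    simpa using choose_sq_mul_pow_lt_factorial_pow hm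
      (three_mul_ceil_sq_le_ceil_sq_mul_ceil hε ha hna)
  refine ⟨SimpleGraph.ofPerms ω,
    fun v => by simpa using SimpleGraph.ncard_neighborSet_ofPerms_le ω v, fun S T hST hS hT => ?_⟩
  obtain ⟨x, hx, k, hk⟩ := hω S T (Nat.ceil_le.2 hS) (Nat.ceil_le.2 hT)
  exact ⟨x, hx, ω k x, hk, SimpleGraph.ofPerms_adj_apply k
    fun h => disjoint_left.1 hST hx (h ▸ hk)⟩
end

section
/- For every integer k ≥ 1 and every real ε > 0 there exists an integer a such that the following holds for every positive integer m. Let H be a graph on at least a·m vertices such that for every pair of disjoint sets S, T ⊆ V(H) with |S| ≥ ε·m and |T| ≥ ε·m we have e_H(S,T) > 0. Then for every family A₁, …, A_{k+1} ⊆ V(H) of pairwise disjoint sets, each of size at least ε·a·m, there is a path (x₁, …, x_m) in H (a sequence of m distinct vertices with xᵢxᵢ₊₁ an edge of H for all 1 ≤ i < m) such that xᵢ ∈ A_j for all 1 ≤ i ≤ m, where j is the unique index in {1, …, k+1} with j ≡ i (mod k+1). -/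
/-!
Orient the edges of `H` from each set `A j` to the next one `A (j + 1)`, indices taken modulo
`k + 1`; a directed path of this digraph starting in `A 0` is a path of the required kind.
Run depth-first search in the digraph with roots in `A 0`, keeping track of the finished vertices
`F`, the stack `P` (a directed path) and the unvisited vertices `W`; there is never an arc from
`F` to `W`, and every step either pushes an unvisited vertex or finishes the top of the stack.
Stop when `|F|` reaches `t = ⌈(k + 1) ε m⌉`. If the stack never held `m` vertices, then `F` and
`W` both have at least `(k + 1) ε m` vertices and all but fewer than `m` vertices of `⋃ A j`
lie in `F ∪ W`. Some `A j` then meets `F` in `ε m` vertices, and the expansion property, applied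
once around the cycle of sets, leaves fewer than `ε m` vertices of `W` in every `A j`: a
contradiction.
-/

open Finset Function

theorem Fin.ofNat_add_one (n i : ℕ) : Fin.ofNat (n + 1) i + 1 = Fin.ofNat (n + 1) (i + 1) := by
  ext
  simp [Fin.val_add, Nat.add_mod]

theorem Fin.cyclic_induction {n : ℕ} {p : Fin (n + 1) → Prop} {j₀ : Fin (n + 1)} (h₀ : p j₀)
    (h : ∀ j, p j → p (j + 1)) (j : Fin (n + 1)) : p j := by
  have hd : ∀ d : ℕ, p (j₀ + Fin.ofNat (n + 1) d) := by
    intro d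
    induction d with
    | zero => simpa using h₀
    | succ d ih =>
      rw [← Fin.ofNat_add_one, ← add_assoc]
      exact h _ ih
  simpa using hd (j - j₀).val

theorem Finset.card_le_sum_card_inter {V ι : Type*} [DecidableEq V] [Fintype ι]
    {A : ι → Finset V} {F : Finset V} (hF : F ⊆ univ.biUnion A) :
    #F ≤ ∑ i, #(F ∩ A i) := by
  refine (card_le_card fun v hv => ?_).trans card_biUnion_le
  obtain ⟨i, -, hi⟩ := mem_biUnion.1 (hF hv)
  exact mem_biUnion.2 ⟨i, mem_univ i, mem_inter.2 ⟨hv, hi⟩⟩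

theorem List.Nodup.exists_injOn_isChain {α : Type*} {R : α → α → Prop} {p : ℕ → α → Prop}
    {Q : List α} (hQ : Q.Nodup) (hne : Q ≠ []) (hR : Q.IsChain R)
    (hp : ∀ i (hi : i < Q.length), p i Q[i]) :
    ∃ x : ℕ → α, Set.InjOn x (Set.Iio Q.length) ∧
      (∀ i, i + 1 < Q.length → R (x i) (x (i + 1))) ∧ ∀ i < Q.length, p i (x i) := by
  refine ⟨fun i => Q.getD i (Q.head hne), fun i hi j hj hij => ?_, fun i hi => ?_, fun i hi => ?_⟩
  · simp only [Set.mem_Iio] at hi hj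
    dsimp only at hij
    rwa [getD_eq_getElem _ _ hi, getD_eq_getElem _ _ hj, hQ.getElem_inj_iff] at hij
  · dsimp only
    rw [getD_eq_getElem _ _ hi, getD_eq_getElem _ _ (Nat.lt_of_succ_lt hi)]
    exact hR.getElem i hi
  · dsimp only
    rw [getD_eq_getElem _ _ hi]
    exact hp i hi

section DepthFirstSearch

variable {V : Type*} (R : V → V → Prop) (U S : Finset V)

/-- A state of depth-first search for `R`-paths in `U` with roots in `S`: `F` is the set of
finished vertices, and the stack `P` is kept top first, so it is a reversed `R`-path whose last
entry is its root. -/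
structure IsDFSState (F : Finset V) (P : List V) : Prop where
  finished_subset : F ⊆ U
  stack_subset : ∀ v ∈ P, v ∈ U
  stack_not_mem_finished : ∀ v ∈ P, v ∉ F
  nodup : P.Nodup
  isChain : P.IsChain fun a b => R b a
  root_mem : ∀ v ∈ P.getLast?, v ∈ S
  not_rel : ∀ u ∈ F, ∀ w ∈ U, w ∉ F → w ∉ P → ¬ R u w

variable {R U S}

theorem IsDFSState.nil : IsDFSState R U S ∅ [] where
  finished_subset := empty_subset U
  stack_subset := by simp
  stack_not_mem_finished := by simp
  nodup := List.nodup_nil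
  isChain := List.IsChain.nil
  root_mem := by simp
  not_rel := by simp

theorem IsDFSState.push {F : Finset V} {P : List V} {w : V} (h : IsDFSState R U S F P)
    (hwU : w ∈ U) (hwF : w ∉ F) (hwP : w ∉ P) (hroot : P = [] → w ∈ S)
    (hrel : ∀ v ∈ P.head?, R v w) : IsDFSState R U S F (w :: P) where
  finished_subset := h.finished_subset
  stack_subset := List.forall_mem_cons.2 ⟨hwU, h.stack_subset⟩
  stack_not_mem_finished := List.forall_mem_cons.2 ⟨hwF, h.stack_not_mem_finished⟩
  nodup := List.nodup_cons.2 ⟨hwP, h.nodup⟩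
  isChain := List.isChain_cons.2 ⟨hrel, h.isChain⟩
  root_mem := by
    cases P with
    | nil => simpa using hroot rfl
    | cons v P => simpa using h.root_mem
  not_rel u hu x hxU hxF hxP :=
    h.not_rel u hu x hxU hxF fun hx => hxP (List.mem_cons_of_mem w hx)

theorem IsDFSState.pop [DecidableEq V] {F : Finset V} {P : List V} {v : V}
    (h : IsDFSState R U S F (v :: P)) (hv : ∀ w ∈ U, w ∉ F → w ∉ v :: P → ¬ R v w) :
    IsDFSState R U S (insert v F) P where
  finished_subset := insert_subset (h.stack_subset v List.mem_cons_self) h.finished_subset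
  stack_subset x hx := h.stack_subset x (List.mem_cons_of_mem v hx)
  stack_not_mem_finished x hx := by
    rw [mem_insert, not_or]
    exact ⟨fun hxv => (List.nodup_cons.1 h.nodup).1 (hxv ▸ hx),
      h.stack_not_mem_finished x (List.mem_cons_of_mem v hx)⟩
  nodup := (List.nodup_cons.1 h.nodup).2
  isChain := h.isChain.tail
  root_mem x hx := by
    cases P with
    | nil => simp at hx
    | cons y P => exact h.root_mem x (by simpa using hx)
  not_rel u hu w hwU hwF hwP := by
    rw [mem_insert, not_or] at hwF
    have hw : w ∉ v :: P := by simp [hwF.1, hwP]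
    obtain rfl | hu := mem_insert.1 hu
    exacts [hv w hwU hwF.2 hw, h.not_rel u hu w hwU hwF.2 hw]

theorem IsDFSState.length_le_card [DecidableEq V] {F : Finset V} {P : List V}
    (h : IsDFSState R U S F P) : P.length ≤ #(U \ F) := by
  rw [← List.toFinset_card_of_nodup h.nodup]
  refine card_le_card fun v hv => ?_
  rw [List.mem_toFinset] at hv
  exact mem_sdiff.2 ⟨h.stack_subset v hv, h.stack_not_mem_finished v hv⟩

variable [DecidableEq V] {m t : ℕ}
  (hR : ∀ F W, F ⊆ U → W ⊆ U → Disjoint F W → #F = t → #(U \ (F ∪ W)) < m →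
    ∃ u ∈ F, ∃ w ∈ W, R u w)
include hR

theorem IsDFSState.card_ne {F : Finset V} {P : List V} (h : IsDFSState R U S F P)
    (hP : P.length < m) : #F ≠ t := by
  intro hF
  have hrest : U \ (F ∪ ((U \ F) \ P.toFinset)) ⊆ P.toFinset := by
    intro v hv
    simp only [mem_sdiff, mem_union] at hv
    tauto
  obtain ⟨u, hu, w, hw, huw⟩ := hR F ((U \ F) \ P.toFinset) h.finished_subset
    (sdiff_subset.trans sdiff_subset) (disjoint_sdiff.mono_right sdiff_subset) hF
    ((card_le_card hrest).trans_lt ((List.toFinset_card_le P).trans_lt hP))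
  simp only [mem_sdiff, List.mem_toFinset] at hw
  exact h.not_rel u hu w hw.1.1 hw.1.2 hw.2 huw

/-- `2 * #(U \ F) - P.length` is twice the number of unvisited vertices plus the height of the
stack, so it drops at every push and at every pop. -/
theorem IsDFSState.exists_step (hSU : S ⊆ U) (hSt : t ≤ #S) {F : Finset V} {P : List V}
    (h : IsDFSState R U S F P) (hF : #F < t) (hP : P.length < m) :
    ∃ F' P', IsDFSState R U S F' P' ∧ #F' < t ∧ P'.length ≤ m ∧
      2 * #(U \ F') - P'.length < 2 * #(U \ F) - P.length := by
  cases P with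
  | nil =>
    obtain ⟨w, hw⟩ : (S \ F).Nonempty := by
      rw [← card_pos]
      have := le_card_sdiff F S
      omega
    rw [mem_sdiff] at hw
    have h' := h.push (hSU hw.1) hw.2 List.not_mem_nil (fun _ => hw.1) (by simp)
    have := h'.length_le_card
    simp only [List.length_singleton, List.length_nil] at this hP ⊢
    exact ⟨F, [w], h', hF, hP, by simp only [List.length_singleton]; omega⟩
  | cons v P =>
    simp only [List.length_cons] at hP ⊢
    by_cases hext : ∃ w ∈ U, w ∉ F ∧ w ∉ v :: P ∧ R v w
    · obtain ⟨w, hwU, hwF, hwP, hvw⟩ := hext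
      have h' := h.push hwU hwF hwP (by simp) (by simpa using hvw)
      have := h'.length_le_card
      simp only [List.length_cons] at this
      exact ⟨F, w :: v :: P, h', hF, by simp only [List.length_cons]; omega,
        by simp only [List.length_cons]; omega⟩
    · simp only [not_exists, not_and] at hext
      have h' := h.pop hext
      have hvUF : v ∈ U \ F := mem_sdiff.2
        ⟨h.stack_subset v List.mem_cons_self, h.stack_not_mem_finished v List.mem_cons_self⟩
      have hUF : #(U \ insert v F) + 1 = #(U \ F) := by
        rw [sdiff_insert, card_erase_add_one hvUF]
      have := h'.length_le_card
      exact ⟨insert v F, P, h',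
        ((card_insert_le v F).trans hF).lt_of_ne (h'.card_ne hR (by omega)), by omega, by omega⟩

theorem IsDFSState.exists_path (hSU : S ⊆ U) (hSt : t ≤ #S) {F : Finset V} {P : List V}
    (h : IsDFSState R U S F P) (hF : #F < t) (hP : P.length ≤ m) :
    ∃ Q : List V, Q.length = m ∧ Q.Nodup ∧ Q.IsChain R ∧ ∀ v ∈ Q.head?, v ∈ S := by
  induction hn : 2 * #(U \ F) - P.length using Nat.strong_induction_on generalizing F P with
  | _ n ih =>
  rcases hP.eq_or_lt with hPm | hPm
  · refine ⟨P.reverse, by simpa using hPm, List.nodup_reverse.2 h.nodup,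
      List.isChain_reverse.2 h.isChain, fun v hv => h.root_mem v ?_⟩
    simpa using hv
  obtain ⟨F', P', h', hF', hP', hlt⟩ := h.exists_step hR hSU hSt hF hPm
  exact ih _ (hn ▸ hlt) h' hF' hP' rfl

end DepthFirstSearch

namespace SimpleGraph

variable {V : Type*} (H : SimpleGraph V) {n : ℕ} (A : Fin (n + 1) → Finset V)

def LayerAdj (u w : V) : Prop :=
  ∃ j, u ∈ A j ∧ w ∈ A (j + 1) ∧ H.Adj u w

variable {H A}

theorem LayerAdj.adj {u w : V} (h : H.LayerAdj A u w) : H.Adj u w := by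
  obtain ⟨-, -, -, huw⟩ := h
  exact huw

theorem LayerAdj.mem_add_one (hA : Pairwise (Disjoint on A)) {u w : V} {j : Fin (n + 1)}
    (h : H.LayerAdj A u w) (hu : u ∈ A j) : w ∈ A (j + 1) := by
  obtain ⟨j', hu', hw, -⟩ := h
  obtain rfl : j' = j := by
    by_contra hne
    exact Finset.disjoint_left.1 (hA hne) hu' hu
  exact hw

theorem getElem_mem_of_isChain_layerAdj (hA : Pairwise (Disjoint on A)) {Q : List V}
    (hQ : Q.IsChain (H.LayerAdj A)) (h₀ : ∀ v ∈ Q.head?, v ∈ A 0) :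
    ∀ i (hi : i < Q.length), Q[i] ∈ A (Fin.ofNat (n + 1) i)
  | 0, hi => by
    obtain ⟨v, Q, rfl⟩ := List.exists_cons_of_length_pos hi
    simpa using h₀
  | i + 1, hi => by
    rw [← Fin.ofNat_add_one]
    exact (hQ.getElem i hi).mem_add_one hA
      (getElem_mem_of_isChain_layerAdj hA hQ h₀ i (Nat.lt_of_succ_lt hi))

theorem exists_layerAdj_of_le_card [DecidableEq V] {ℓ : ℝ}
    (hexp : ∀ S T : Finset V, Disjoint S T → ℓ ≤ #S → ℓ ≤ #T → ∃ s ∈ S, ∃ t ∈ T, H.Adj s t)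
    {F W : Finset V} (hF : F ⊆ univ.biUnion A) (hW : W ⊆ univ.biUnion A) (hFW : Disjoint F W)
    {m : ℕ} (hrest : #(univ.biUnion A \ (F ∪ W)) < m) (hA : ∀ j, 2 * ℓ + m ≤ #(A j))
    (hFℓ : (n + 1) * ℓ ≤ #F) (hWℓ : (n + 1) * ℓ ≤ #W) :
    ∃ u ∈ F, ∃ w ∈ W, H.LayerAdj A u w := by
  by_contra! hno
  have hW_small : ∀ j, ℓ ≤ #(F ∩ A j) → #(W ∩ A (j + 1)) < (ℓ : ℝ) := by
    intro j hj
    by_contra! hWj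
    obtain ⟨u, hu, w, hw, huw⟩ :=
      hexp _ _ (hFW.mono inter_subset_left inter_subset_left) hj hWj
    rw [mem_inter] at hu hw
    exact hno u hu.1 w hw.1 ⟨j, hu.2, hw.2, huw⟩
  have hsplit : ∀ j, (#(A j) : ℝ) ≤ #(F ∩ A j) + #(W ∩ A j) + #(univ.biUnion A \ (F ∪ W)) := by
    intro j
    have hcover : A j ⊆ (F ∩ A j ∪ W ∩ A j) ∪ (univ.biUnion A \ (F ∪ W)) := by
      intro v hv
      have hvU : v ∈ univ.biUnion A := mem_biUnion.2 ⟨j, mem_univ j, hv⟩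
      simp only [mem_union, mem_inter, mem_sdiff]
      tauto
    exact_mod_cast (card_le_card hcover).trans
      ((card_union_le _ _).trans (Nat.add_le_add_right (card_union_le _ _) _))
  have hF_large : ∀ j, ℓ ≤ #(F ∩ A j) := by
    obtain ⟨j₀, -, hj₀⟩ := exists_le_of_sum_le (f := fun _ => ℓ)
      (g := fun j => (#(F ∩ A j) : ℝ)) univ_nonempty <| by
        simpa using hFℓ.trans (by exact_mod_cast card_le_sum_card_inter hF)
    refine Fin.cyclic_induction hj₀ fun j hj => ?_
    have := hW_small j hj
    have := hsplit (j + 1)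
    have := hA (j + 1)
    have : (#(univ.biUnion A \ (F ∪ W)) : ℝ) < m := by exact_mod_cast hrest
    linarith
  have hW_lt : (#W : ℝ) < (n + 1) * ℓ :=
    calc (#W : ℝ) ≤ ∑ j, (#(W ∩ A j) : ℝ) := by exact_mod_cast card_le_sum_card_inter hW
      _ < ∑ _j : Fin (n + 1), ℓ :=
        sum_lt_sum_of_nonempty univ_nonempty fun j _ => by
          simpa using hW_small (j - 1) (hF_large _)
      _ = (n + 1) * ℓ := by simp
  linarith

theorem exists_isChain_layerAdj [DecidableEq V] {ℓ : ℝ} {m : ℕ} (hℓ : 0 < ℓ) (hm : 0 < m)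
    (hexp : ∀ S T : Finset V, Disjoint S T → ℓ ≤ #S → ℓ ≤ #T → ∃ s ∈ S, ∃ t ∈ T, H.Adj s t)
    (hA : ∀ j, 2 * (n + 1) * ℓ + 2 * m ≤ (#(A j) : ℝ)) :
    ∃ Q : List V, Q.length = m ∧ Q.Nodup ∧ Q.IsChain (H.LayerAdj A) ∧ ∀ v ∈ Q.head?, v ∈ A 0 := by
  have hm1 : (1 : ℝ) ≤ m := by exact_mod_cast hm
  have hnℓ : 0 < ((n : ℝ) + 1) * ℓ := by positivity
  set t := ⌈((n : ℝ) + 1) * ℓ⌉₊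
  have ht : (t : ℝ) < (n + 1) * ℓ + 1 := Nat.ceil_lt_add_one hnℓ.le
  have hA0 : A 0 ⊆ univ.biUnion A := subset_biUnion_of_mem A (mem_univ 0)
  refine IsDFSState.nil.exists_path (t := t) (fun F W hF hW hFW hFt hrest => ?_) hA0
    (Nat.cast_le.1 (by linarith [hA 0] : (t : ℝ) ≤ #(A 0))) (Nat.ceil_pos.2 hnℓ) (Nat.zero_le m)
  have hcover : #(A 0) ≤ #(univ.biUnion A \ (F ∪ W)) + t + #W := by
    rw [← hFt, add_assoc, ← card_union_of_disjoint hFW,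
      card_sdiff_add_card_eq_card (union_subset hF hW)]
    exact card_le_card hA0
  have hcover' : (#(A 0) : ℝ) ≤ #(univ.biUnion A \ (F ∪ W)) + t + #W := by exact_mod_cast hcover
  have hrest' : (#(univ.biUnion A \ (F ∪ W)) : ℝ) + 1 ≤ m := by exact_mod_cast hrest
  refine exists_layerAdj_of_le_card hexp hF hW hFW hrest (fun j => ?_) ?_ ?_
  · nlinarith [hA j]
  · exact hFt ▸ Nat.le_ceil _
  · linarith [hA 0]

end SimpleGraph

open SimpleGraph in
theorem alternating_path_through_sets_general (k : ℕ) (ε : ℝ) (hε : 0 < ε) :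
    ∃ a : ℕ, ∀ m : ℕ, 0 < m →
      ∀ (V : Type) (_ : Fintype V) (_ : DecidableEq V) (H : SimpleGraph V),
        a * m ≤ Fintype.card V →
        (∀ S T : Finset V, Disjoint S T →
          ε * m ≤ (S.card : ℝ) → ε * m ≤ (T.card : ℝ) →
          ∃ s ∈ S, ∃ t ∈ T, H.Adj s t) →
        ∀ A : Fin (k + 1) → Finset V,
          (∀ i j, i ≠ j → Disjoint (A i) (A j)) →
          (∀ i, ε * (a : ℝ) * m ≤ ((A i).card : ℝ)) →
          ∃ x : ℕ → V, Set.InjOn x (Set.Iio m) ∧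
            (∀ i, i + 1 < m → H.Adj (x i) (x (i + 1))) ∧
            (∀ i < m, x i ∈ A ⟨i % (k + 1), Nat.mod_lt i (Nat.succ_pos k)⟩) := by
  refine ⟨2 * (k + 1) + ⌈2 / ε⌉₊, fun m hm V _ _ H _ hexp A hdisj hA => ?_⟩
  have hεa : 2 ≤ ε * ⌈2 / ε⌉₊ := (div_le_iff₀' hε).1 (Nat.le_ceil _)
  obtain ⟨Q, rfl, hQ, hchain, h₀⟩ := exists_isChain_layerAdj (by positivity) hm hexp fun j => by
    have := hA j
    push_cast at this
    nlinarith
  exact hQ.exists_injOn_isChain (List.ne_nil_of_length_pos hm) (hchain.imp fun _ _ => LayerAdj.adj)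
    (getElem_mem_of_isChain_layerAdj (fun i j => hdisj i j) hchain h₀)

/-- For every `k ≥ 1` and `ε > 0` there is an integer `a` such that for every `m ≥ 1`
the following holds.  If `H` is a graph on at least `a * m` vertices in which any two
disjoint vertex sets of size at least `ε * m` are joined by an edge, then for every
family `A₀, …, A_k` of `k + 1` pairwise disjoint vertex sets, each of size at least
`ε * a * m`, there is a path `(x₀, …, x_{m-1})` in `H` whose `i`-th vertex belongs to
`A_{i mod (k+1)}` (this is the 1-based condition `xᵢ ∈ A_j` for `j ≡ i (mod k+1)`). -/
theorem alternating_path_through_sets (k : ℕ) (hk : 1 ≤ k) (ε : ℝ) (hε : 0 < ε) :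
    ∃ a : ℕ, ∀ m : ℕ, 0 < m →
      ∀ (V : Type) (_ : Fintype V) (_ : DecidableEq V) (H : SimpleGraph V),
        a * m ≤ Fintype.card V →
        (∀ S T : Finset V, Disjoint S T →
          ε * m ≤ (S.card : ℝ) → ε * m ≤ (T.card : ℝ) →
          ∃ s ∈ S, ∃ t ∈ T, H.Adj s t) →
        ∀ A : Fin (k + 1) → Finset V,
          (∀ i j, i ≠ j → Disjoint (A i) (A j)) →
          (∀ i, ε * (a : ℝ) * m ≤ ((A i).card : ℝ)) →
          ∃ x : ℕ → V, Set.InjOn x (Set.Iio m) ∧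
            (∀ i, i + 1 < m → H.Adj (x i) (x (i + 1))) ∧
            (∀ i < m, x i ∈ A ⟨i % (k + 1), Nat.mod_lt i (Nat.succ_pos k)⟩) :=
  alternating_path_through_sets_general k ε hε
end

section
/- Let ℓ = 17, k = 2ℓ, t = 8k + 40k² + 5, and let t′ be any integer such that every 2-colouring of the triples of a complete 3-uniform hypergraph on t′ vertices contains a monochromatic complete 3-uniform hypergraph on t vertices. Let G be a graph, let G^k be its k-th power (u,v adjacent in G^k iff their distance in G is between 1 and k), let G^k(t′) be obtained from G^k by replacing every vertex v by a clique H(v) on t′ vertices and every edge by a complete bipartite graph between the corresponding cliques, and let H be the 3-uniform hypergraph on V(G^k(t′)) whose edges are exactly the vertex sets of triangles of G^k(t′). Fix a colouring of the edges of H with colours red and blue, let V ⊆ V(G) be a set of vertices such that for each v ∈ V a set H′(v) ⊆ H(v) of t vertices is chosen all of whose triples are blue edges of H, and let F be the (2,3)-graph on V with uv ∈ E(F) iff there is a blue (6,6)-connector between H′(u) and H′(v), and uv(w) ∈ E(F) iff there is a blue (6,3,6)-connector between H′(u) and H′(v) through H′(w). If F contains a (2,3)-path on n vertices, then H contains a blue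 tight path on n vertices, i.e., a blue copy of P⁽³⁾ₙ. -/
/-- The `k`-th power of a graph `G`: two distinct vertices are adjacent iff their
distance in `G` is between `1` and `k`, i.e. they are joined by a walk of length
at most `k`. -/
def graphPow {V : Type} (G : SimpleGraph V) (k : ℕ) : SimpleGraph V where
  Adj u v := u ≠ v ∧ ∃ p : G.Walk u v, p.length ≤ k
  symm := by
    constructor
    rintro u v ⟨hne, p, hp⟩
    exact ⟨hne.symm, p.reverse, by simpa using hp⟩
  loopless := by constructor; rintro u ⟨h, -⟩; exact h rfl

/-- The blow-up `G(t')` of a graph `G`: every vertex is replaced by a clique on `t'`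
vertices and every edge by a complete bipartite graph between the corresponding
cliques. -/
def blowupGraph {V : Type} (G : SimpleGraph V) (t' : ℕ) : SimpleGraph (V × Fin t') where
  Adj a b := (a.1 = b.1 ∧ a.2 ≠ b.2) ∨ G.Adj a.1 b.1
  symm := by
    constructor
    rintro a b (⟨h1, h2⟩ | h)
    · exact Or.inl ⟨h1.symm, h2.symm⟩
    · exact Or.inr h.symm
  loopless := by
    constructor
    rintro a (⟨-, h⟩ | h)
    · exact h rfl
    · exact G.loopless.irrefl _ h

/-- `{a, b, c}` spans a triangle of the graph `B`, i.e. it is an edge of the 3-uniform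
hypergraph `H` of triangles of `B`. -/
def IsTriangle {W : Type} (B : SimpleGraph W) (a b c : W) : Prop :=
  B.Adj a b ∧ B.Adj a c ∧ B.Adj b c

/-- `{a, b, c}` is a blue edge of the triangle hypergraph of `B` under the colouring
`χ` (where `true` is blue). -/
def BlueTriple {W : Type} [DecidableEq W] (B : SimpleGraph W) (χ : Finset W → Bool)
    (a b c : W) : Prop :=
  IsTriangle B a b c ∧ χ {a, b, c} = true

/-- A blue `(2,2)`-connector between `A` and `C` with vertices `x1, x2 ∈ A` and
`y1, y2 ∈ C`: the triples `x1x2y1` and `y1y2x1` are blue edges. -/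
def Conn22 {W : Type} [DecidableEq W] (B : SimpleGraph W) (χ : Finset W → Bool)
    (A C : Finset W) (x1 x2 y1 y2 : W) : Prop :=
  x1 ∈ A ∧ x2 ∈ A ∧ y1 ∈ C ∧ y2 ∈ C ∧ ({x1, x2, y1, y2} : Finset W).card = 4 ∧
  BlueTriple B χ x1 x2 y1 ∧ BlueTriple B χ y1 y2 x1

/-- A blue `(6,6)`-connector between `A` and `C`: three pairwise vertex-disjoint blue
`(2,2)`-connectors between `A` and `C`. -/
def Conn66 {W : Type} [DecidableEq W] (B : SimpleGraph W) (χ : Finset W → Bool)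
    (A C : Finset W) : Prop :=
  ∃ q : Fin 3 → W × W × W × W,
    (∀ i, Conn22 B χ A C (q i).1 (q i).2.1 (q i).2.2.1 (q i).2.2.2) ∧
    (∀ i j, i ≠ j →
      Disjoint ({(q i).1, (q i).2.1, (q i).2.2.1, (q i).2.2.2} : Finset W)
               ({(q j).1, (q j).2.1, (q j).2.2.1, (q j).2.2.2} : Finset W))

/-- A blue `(2,1,2)`-connector between `A` and `C` through `Z` with vertices
`x1, x2 ∈ A`, `z ∈ Z`, `y1, y2 ∈ C`: the triples `x1x2z`, `x1zy1` and `zy1y2` are blue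
edges. -/
def Conn212 {W : Type} [DecidableEq W] (B : SimpleGraph W) (χ : Finset W → Bool)
    (A C Z : Finset W) (x1 x2 z y1 y2 : W) : Prop :=
  x1 ∈ A ∧ x2 ∈ A ∧ z ∈ Z ∧ y1 ∈ C ∧ y2 ∈ C ∧
  ({x1, x2, z, y1, y2} : Finset W).card = 5 ∧
  BlueTriple B χ x1 x2 z ∧ BlueTriple B χ x1 z y1 ∧ BlueTriple B χ z y1 y2

/-- A blue `(6,3,6)`-connector between `A` and `C` through `Z`: three pairwise
vertex-disjoint blue `(2,1,2)`-connectors between `A` and `C` through `Z`. -/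
def Conn636 {W : Type} [DecidableEq W] (B : SimpleGraph W) (χ : Finset W → Bool)
    (A C Z : Finset W) : Prop :=
  ∃ q : Fin 3 → W × W × W × W × W,
    (∀ i, Conn212 B χ A C Z (q i).1 (q i).2.1 (q i).2.2.1 (q i).2.2.2.1 (q i).2.2.2.2) ∧
    (∀ i j, i ≠ j →
      Disjoint
        ({(q i).1, (q i).2.1, (q i).2.2.1, (q i).2.2.2.1, (q i).2.2.2.2} : Finset W)
        ({(q j).1, (q j).2.1, (q j).2.2.1, (q j).2.2.2.1, (q j).2.2.2.2} : Finset W))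

/-!
Walk along the `(2,3)`-path, growing a blue tight path at its head. Before step `m` the path
starts with two vertices `d, c` of the cluster of `x m`, and all its other vertices lie in
clusters visited earlier. For the edge from `x m` to `x (m + 1)` take a connector
`x1 x2 [z] y1 y2` and prepend it reversed, giving `y2 y1 [z] x1 x2 d c …`: the triples
`x1 x2 d` and `x2 d c` are blue because clusters are blue cliques, the others are connector
edges. Of the three disjoint connectors one avoids `d` and `c`; every other new vertex lies in a
cluster not visited so far, so the path stays injective.
-/

def TightChain {α : Type} (R : α → α → α → Prop) : List α → Prop
  | a :: b :: c :: l => R a b c ∧ TightChain R (b :: c :: l)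
  | _ => True

theorem TightChain.getElem {α : Type} {R : α → α → α → Prop} :
    ∀ {l : List α}, TightChain R l → ∀ {i : ℕ} (hi : i + 2 < l.length),
      R l[i] l[i + 1] l[i + 2]
  | a :: b :: c :: l, h, 0, _ => h.1
  | a :: b :: c :: l, h, i + 1, hi => TightChain.getElem h.2 (i := i) (by simpa using hi)

theorem exists_injOn_of_tightChain {α : Type} {R : α → α → α → Prop} {l : List α} {n : ℕ}
    (a : α) (hnd : l.Nodup) (hch : TightChain R l) (hn : n ≤ l.length) :
    ∃ f : ℕ → α, Set.InjOn f (Set.Iio n) ∧ ∀ i, i + 2 < n → R (f i) (f (i + 1)) (f (i + 2)) := by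
  refine ⟨fun i => l.getD i a, fun i hi j hj hij => ?_, fun i hi => ?_⟩
  · simp only [Set.mem_Iio] at hi hj
    simp only [List.getD_eq_getElem _ _ (show i < l.length by omega),
      List.getD_eq_getElem _ _ (show j < l.length by omega)] at hij
    exact (hnd.getElem_inj_iff).1 hij
  · simp only [List.getD_eq_getElem _ _ (show i < l.length by omega),
      List.getD_eq_getElem _ _ (show i + 1 < l.length by omega),
      List.getD_eq_getElem _ _ (show i + 2 < l.length by omega)]
    exact hch.getElem (by omega)

theorem exists_notMem_notMem_of_pairwise_disjoint {ι α : Type} [Fintype ι]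
    (hι : 2 < Fintype.card ι) (S : ι → Finset α)
    (hS : ∀ i j, i ≠ j → Disjoint (S i) (S j)) (p q : α) : ∃ i, p ∉ S i ∧ q ∉ S i := by
  classical
  by_contra! hcov
  obtain ⟨i, j, hij, hpij⟩ := Fintype.exists_ne_map_eq_of_card_lt (fun i => decide (p ∈ S i))
    (by simpa using hι)
  have hdisj := Finset.disjoint_left.1 (hS i j hij)
  by_cases hp : p ∈ S i
  · exact hdisj hp (by simpa [hp] using hpij)
  · have hpj : p ∉ S j := by simpa [hp] using hpij
    exact hdisj (hcov i hp) (hcov j hpj)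

section Connectors

variable {W : Type} [DecidableEq W] {B : SimpleGraph W} {χ : Finset W → Bool}

theorem BlueTriple.swap {a b c : W} (h : BlueTriple B χ a b c) : BlueTriple B χ b a c := by
  obtain ⟨⟨hab, hac, hbc⟩, hχ⟩ := h
  exact ⟨⟨hab.symm, hbc, hac⟩, by rwa [Finset.insert_comm b a]⟩

theorem BlueTriple.rotate {a b c : W} (h : BlueTriple B χ a b c) : BlueTriple B χ c a b := by
  obtain ⟨⟨hab, hac, hbc⟩, hχ⟩ := h
  refine ⟨⟨hac.symm, hbc.symm, hab⟩, ?_⟩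
  rwa [Finset.insert_comm c a, Finset.pair_comm c b]

theorem Conn66.exists_conn22_avoiding {A C : Finset W} (h : Conn66 B χ A C) (p q : W) :
    ∃ x1 x2 y1 y2, Conn22 B χ A C x1 x2 y1 y2 ∧
      p ∉ ({x1, x2, y1, y2} : Finset W) ∧ q ∉ ({x1, x2, y1, y2} : Finset W) := by
  obtain ⟨r, hr, hdisj⟩ := h
  obtain ⟨i, hp, hq⟩ := exists_notMem_notMem_of_pairwise_disjoint (by simp) _ hdisj p q
  exact ⟨_, _, _, _, hr i, hp, hq⟩

theorem Conn636.exists_conn212_avoiding {A C Z : Finset W} (h : Conn636 B χ A C Z) (p q : W) :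
    ∃ x1 x2 z y1 y2, Conn212 B χ A C Z x1 x2 z y1 y2 ∧
      p ∉ ({x1, x2, z, y1, y2} : Finset W) ∧ q ∉ ({x1, x2, z, y1, y2} : Finset W) := by
  obtain ⟨r, hr, hdisj⟩ := h
  obtain ⟨i, hp, hq⟩ := exists_notMem_notMem_of_pairwise_disjoint (by simp) _ hdisj p q
  exact ⟨_, _, _, _, _, hr i, hp, hq⟩

end Connectors

section Construction

variable {W VG : Type} [DecidableEq W] {B : SimpleGraph W} {χ : Finset W → Bool}
  {V : Set VG} {H' : VG → Finset W} {n : ℕ} {x : ℕ → VG} {w : ℕ → Option VG}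

/-- A `(2,3)`-path `x 0, …, x (n-1)` in the `(2,3)`-graph of blue connectors between the
clusters `H' v`: the step from `x i` to `x (i + 1)` is a 2-edge when `w i = none` and a 3-edge
through `z` when `w i = some z`. -/
structure IsConnectorPath (B : SimpleGraph W) (χ : Finset W → Bool) (V : Set VG)
    (H' : VG → Finset W) (n : ℕ) (x : ℕ → VG) (w : ℕ → Option VG) : Prop where
  mem : ∀ i < n, x i ∈ V
  injOn : Set.InjOn x (Set.Iio n)
  step : ∀ i, i + 1 < n →
    (w i = none ∧ Conn66 B χ (H' (x i)) (H' (x (i + 1)))) ∨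
    (∃ z, w i = some z ∧ z ∈ V ∧ (∀ j < n, z ≠ x j) ∧
      Conn636 B χ (H' (x i)) (H' (x (i + 1))) (H' z))
  w_injOn : ∀ i j, i + 1 < n → j + 1 < n → w i ≠ none → w i = w j → i = j

def VisitedBefore (x : ℕ → VG) (w : ℕ → Option VG) (m : ℕ) (u : VG) : Prop :=
  ∃ j < m, x j = u ∨ w j = some u

theorem visitedBefore_succ {m : ℕ} {u : VG} :
    VisitedBefore x w (m + 1) u ↔ VisitedBefore x w m u ∨ x m = u ∨ w m = some u := by
  simp only [VisitedBefore, Nat.lt_succ_iff_lt_or_eq, or_and_right, exists_or]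
  simp

theorem visitedBefore_succ_of_or {m : ℕ} {u : VG} (hu : u = x m ∨ VisitedBefore x w m u) :
    VisitedBefore x w (m + 1) u :=
  visitedBefore_succ.2 (hu.elim (fun h => Or.inr (Or.inl h.symm)) Or.inl)

namespace IsConnectorPath

theorem ne_of_w_eq_some (hP : IsConnectorPath B χ V H' n x w) {i : ℕ} {u : VG}
    (hi : i + 1 < n) (hwu : w i = some u) : ∀ j < n, u ≠ x j := by
  rcases hP.step i hi with ⟨hnone, -⟩ | ⟨z, hz, -, hzx, -⟩
  · simp [hnone] at hwu
  · obtain rfl : z = u := Option.some_inj.1 (hz.symm.trans hwu)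
    exact hzx

theorem not_visitedBefore_x (hP : IsConnectorPath B χ V H' n x w) {m i : ℕ} (hmi : m ≤ i)
    (hi : i < n) : ¬ VisitedBefore x w m (x i) := by
  rintro ⟨j, hj, hxj | hwj⟩
  · have := hP.injOn (Set.mem_Iio.2 (by omega)) (Set.mem_Iio.2 hi) hxj
    omega
  · exact hP.ne_of_w_eq_some (by omega) hwj i hi rfl

theorem not_visitedBefore_of_w_eq_some (hP : IsConnectorPath B χ V H' n x w) {m : ℕ} {u : VG}
    (hm : m + 1 < n) (hwu : w m = some u) : ¬ VisitedBefore x w m u := by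
  rintro ⟨j, hj, hxj | hwj⟩
  · exact hP.ne_of_w_eq_some hm hwu j (by omega) hxj.symm
  · have := hP.w_injOn j m (by omega) hm (by simp [hwj]) (hwj.trans hwu.symm)
    omega

end IsConnectorPath

structure IsBlueClusters (B : SimpleGraph W) (χ : Finset W → Bool) (V : Set VG)
    (H' : VG → Finset W) (π : W → VG) : Prop where
  owner : ∀ v ∈ V, ∀ p ∈ H' v, π p = v
  clique : ∀ v ∈ V, ∀ p ∈ H' v, ∀ q ∈ H' v, ∀ r ∈ H' v,
    p ≠ q → p ≠ r → q ≠ r → BlueTriple B χ p q r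

def IsTightPathAt (B : SimpleGraph W) (χ : Finset W → Bool) (H' : VG → Finset W)
    (x : ℕ → VG) (w : ℕ → Option VG) (π : W → VG) (m : ℕ) (d c : W) (L : List W) : Prop :=
  d ∈ H' (x m) ∧ c ∈ H' (x m) ∧ (∀ p ∈ L, VisitedBefore x w m (π p)) ∧
    (d :: c :: L).Nodup ∧ TightChain (BlueTriple B χ) (d :: c :: L)

variable {π : W → VG}

theorem IsConnectorPath.notMem_of_mem_cluster (hP : IsConnectorPath B χ V H' n x w)
    (hC : IsBlueClusters B χ V H' π) {m : ℕ} (hm : m < n) {K : List W}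
    (hK : ∀ p ∈ K, VisitedBefore x w m (π p)) {y : W} (hy : y ∈ H' (x m)) : y ∉ K :=
  fun hyK => hP.not_visitedBefore_x le_rfl hm (hC.owner _ (hP.mem m hm) y hy ▸ hK y hyK)

theorem IsTightPathAt.cons_cons (hP : IsConnectorPath B χ V H' n x w)
    (hC : IsBlueClusters B χ V H' π) {m : ℕ} (hm : m < n) {d c : W} {L : List W}
    (h : IsTightPathAt B χ H' x w π m d c L) {x1 x2 : W} (hx1 : x1 ∈ H' (x m))
    (hx2 : x2 ∈ H' (x m)) (h12 : x1 ≠ x2) (h1d : x1 ≠ d) (h1c : x1 ≠ c) (h2d : x2 ≠ d)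
    (h2c : x2 ≠ c) :
    (x1 :: x2 :: d :: c :: L).Nodup ∧ TightChain (BlueTriple B χ) (x1 :: x2 :: d :: c :: L) ∧
      ∀ p ∈ x1 :: x2 :: d :: c :: L, π p = x m ∨ VisitedBefore x w m (π p) := by
  obtain ⟨hd, hc, hL, hnd, hch⟩ := h
  have hxm : x m ∈ V := hP.mem m hm
  have hdc : d ≠ c := fun h => (List.nodup_cons.1 hnd).1 (by simp [h])
  have hout : ∀ p ∈ H' (x m), p ∉ L := fun p => hP.notMem_of_mem_cluster hC hm hL
  refine ⟨?_, ⟨hC.clique _ hxm x1 hx1 x2 hx2 d hd h12 h1d h2d,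
    hC.clique _ hxm x2 hx2 d hd c hc h2d h2c hdc, hch⟩, ?_⟩
  · simp only [List.nodup_cons, List.mem_cons, not_or] at hnd ⊢
    exact ⟨⟨h12, h1d, h1c, hout x1 hx1⟩, ⟨h2d, h2c, hout x2 hx2⟩, hnd⟩
  · simp only [List.mem_cons]
    rintro p (rfl | rfl | rfl | rfl | hp)
    · exact Or.inl (hC.owner _ hxm p hx1)
    · exact Or.inl (hC.owner _ hxm p hx2)
    · exact Or.inl (hC.owner _ hxm p hd)
    · exact Or.inl (hC.owner _ hxm p hc)
    · exact Or.inr (hL p hp)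

theorem IsTightPathAt.extend_of_conn66 (hP : IsConnectorPath B χ V H' n x w)
    (hC : IsBlueClusters B χ V H' π) {m : ℕ} (hm : m + 1 < n) {d c : W} {L : List W}
    (h : IsTightPathAt B χ H' x w π m d c L)
    (hconn : Conn66 B χ (H' (x m)) (H' (x (m + 1)))) :
    ∃ d' c' L', L.length < L'.length ∧ IsTightPathAt B χ H' x w π (m + 1) d' c' L' := by
  obtain ⟨x1, x2, y1, y2, ⟨hx1, hx2, hy1, hy2, -, hT1, hT2⟩, hd, hc⟩ :=
    hconn.exists_conn22_avoiding d c
  simp only [Finset.mem_insert, Finset.mem_singleton, not_or] at hd hc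
  obtain ⟨hKnd, hKch, hK⟩ := h.cons_cons hP hC (by omega) hx1 hx2 hT1.1.1.ne
    (Ne.symm hd.1) (Ne.symm hc.1) (Ne.symm hd.2.1) (Ne.symm hc.2.1)
  have hK' : ∀ p ∈ x1 :: x2 :: d :: c :: L, VisitedBefore x w (m + 1) (π p) :=
    fun p hp => visitedBefore_succ_of_or (hK p hp)
  have hyK : ∀ {y}, y ∈ H' (x (m + 1)) → y ∉ _ := hP.notMem_of_mem_cluster hC hm hK'
  refine ⟨y2, y1, _, by simp only [List.length_cons]; omega, hy2, hy1, hK', ?_,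
    hT2.swap, hT1.rotate, hKch⟩
  exact List.nodup_cons.2 ⟨List.not_mem_cons_of_ne_of_not_mem hT2.1.1.ne.symm (hyK hy2),
    List.nodup_cons.2 ⟨hyK hy1, hKnd⟩⟩

theorem IsTightPathAt.extend_of_conn636 (hP : IsConnectorPath B χ V H' n x w)
    (hC : IsBlueClusters B χ V H' π) {m : ℕ} (hm : m + 1 < n) {d c : W} {L : List W}
    (h : IsTightPathAt B χ H' x w π m d c L) {u : VG} (hwu : w m = some u) (huV : u ∈ V)
    (hconn : Conn636 B χ (H' (x m)) (H' (x (m + 1))) (H' u)) :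
    ∃ d' c' L', L.length < L'.length ∧ IsTightPathAt B χ H' x w π (m + 1) d' c' L' := by
  obtain ⟨x1, x2, z, y1, y2, ⟨hx1, hx2, hz, hy1, hy2, -, hT1, hT2, hT3⟩, hd, hc⟩ :=
    hconn.exists_conn212_avoiding d c
  simp only [Finset.mem_insert, Finset.mem_singleton, not_or] at hd hc
  obtain ⟨hKnd, hKch, hK⟩ := h.cons_cons hP hC (by omega) hx1 hx2 hT1.1.1.ne
    (Ne.symm hd.1) (Ne.symm hc.1) (Ne.symm hd.2.1) (Ne.symm hc.2.1)
  have hux := hP.ne_of_w_eq_some hm hwu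
  have hπz : π z = u := hC.owner u huV z hz
  have hzK : z ∉ x1 :: x2 :: d :: c :: L := fun hzK =>
    (hπz ▸ hK z hzK).elim (hux m (by omega)) (hP.not_visitedBefore_of_w_eq_some hm hwu)
  have hK' : ∀ p ∈ z :: x1 :: x2 :: d :: c :: L, VisitedBefore x w (m + 1) (π p) := by
    intro p hp
    rcases List.mem_cons.1 hp with rfl | hp
    · exact visitedBefore_succ.2 (Or.inr (Or.inr (hπz ▸ hwu)))
    · exact visitedBefore_succ_of_or (hK p hp)
  have hyK : ∀ {y}, y ∈ H' (x (m + 1)) → y ∉ _ := hP.notMem_of_mem_cluster hC hm hK'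
  refine ⟨y2, y1, _, by simp only [List.length_cons]; omega, hy2, hy1, hK', ?_,
    hT3.swap.rotate, hT2.swap.rotate, hT1.rotate, hKch⟩
  exact List.nodup_cons.2 ⟨List.not_mem_cons_of_ne_of_not_mem hT3.1.2.2.ne.symm (hyK hy2),
    List.nodup_cons.2 ⟨hyK hy1, List.nodup_cons.2 ⟨hzK, hKnd⟩⟩⟩

theorem IsConnectorPath.exists_isTightPathAt (hP : IsConnectorPath B χ V H' n x w)
    (hC : IsBlueClusters B χ V H' π) (hcard : ∀ v ∈ V, 1 < (H' v).card) :
    ∀ m < n, ∃ d c L, m ≤ L.length ∧ IsTightPathAt B χ H' x w π m d c L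
  | 0, hn => by
    obtain ⟨d, hd, c, hc, hdc⟩ := Finset.one_lt_card.1 (hcard _ (hP.mem 0 hn))
    exact ⟨d, c, [], le_rfl, hd, hc, by simp, by simp [hdc], trivial⟩
  | m + 1, hm => by
    obtain ⟨d, c, L, hlen, h⟩ := hP.exists_isTightPathAt hC hcard m (by omega)
    obtain ⟨d', c', L', hlt, h'⟩ :
        ∃ d' c' L', L.length < L'.length ∧ IsTightPathAt B χ H' x w π (m + 1) d' c' L' := by
      rcases hP.step m hm with ⟨-, hconn⟩ | ⟨u, hwu, huV, -, hconn⟩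
      · exact h.extend_of_conn66 hP hC hm hconn
      · exact h.extend_of_conn636 hP hC hm hwu huV hconn
    exact ⟨d', c', L', by omega, h'⟩

theorem IsConnectorPath.exists_blue_tightChain (hP : IsConnectorPath B χ V H' n x w)
    (hC : IsBlueClusters B χ V H' π) (hcard : ∀ v ∈ V, 1 < (H' v).card) :
    ∃ l : List W, n ≤ l.length ∧ l.Nodup ∧ TightChain (BlueTriple B χ) l := by
  rcases Nat.eq_zero_or_pos n with rfl | hn
  · exact ⟨[], le_rfl, List.nodup_nil, trivial⟩
  obtain ⟨d, c, L, hlen, -, -, -, hnd, hch⟩ :=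
    hP.exists_isTightPathAt hC hcard (n - 1) (by omega)
  exact ⟨d :: c :: L, by simp only [List.length_cons]; omega, hnd, hch⟩

end Construction

theorem blowupGraph_adj_of_fst_eq {V : Type} {G : SimpleGraph V} {t' : ℕ} {a b : V × Fin t'}
    (h : a.1 = b.1) (hne : a ≠ b) : (blowupGraph G t').Adj a b :=
  Or.inl ⟨h, fun h2 => hne (Prod.ext h h2)⟩

theorem blue_tight_path_from_23_path_general
    (k t t' : ℕ) (ht : t = 8 * k + 40 * k ^ 2 + 5)
    (ht' : ∀ c : Finset (Fin t') → Bool, ∃ (S : Finset (Fin t')) (b : Bool),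
      S.card = t ∧ ∀ e ⊆ S, e.card = 3 → c e = b)
    (VG : Type) [DecidableEq VG] (G : SimpleGraph VG)
    (χ : Finset (VG × Fin t') → Bool)
    (V : Set VG) (H' : VG → Finset (VG × Fin t'))
    (hH' : ∀ v ∈ V, (H' v).card = t ∧ (∀ x ∈ H' v, x.1 = v) ∧
      ∀ a b c : VG × Fin t', a ∈ H' v → b ∈ H' v → c ∈ H' v →
        a ≠ b → a ≠ c → b ≠ c → χ {a, b, c} = true)
    (n : ℕ) (x : ℕ → VG)
    (hxV : ∀ i < n, x i ∈ V) (hxinj : Set.InjOn x (Set.Iio n))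
    (w : ℕ → Option VG)
    (hpath : ∀ i, i + 1 < n →
      (w i = none ∧
        Conn66 (blowupGraph (graphPow G k) t') χ (H' (x i)) (H' (x (i + 1)))) ∨
      (∃ z, w i = some z ∧ z ∈ V ∧ (∀ j < n, z ≠ x j) ∧
        Conn636 (blowupGraph (graphPow G k) t') χ (H' (x i)) (H' (x (i + 1))) (H' z)))
    (hw : ∀ i j, i + 1 < n → j + 1 < n → w i ≠ none → w i = w j → i = j) :
    ∃ f : ℕ → VG × Fin t', Set.InjOn f (Set.Iio n) ∧
      ∀ i, i + 2 < n →
        IsTriangle (blowupGraph (graphPow G k) t') (f i) (f (i + 1)) (f (i + 2)) ∧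
        χ {f i, f (i + 1), f (i + 2)} = true := by
  have ht'_pos : 0 < t' := by
    obtain ⟨S, -, hS, -⟩ := ht' fun _ => true
    have := S.card_le_univ
    simp only [Fintype.card_fin] at this
    omega
  have hC : IsBlueClusters (blowupGraph (graphPow G k) t') χ V H' Prod.fst := by
    refine ⟨fun v hv => (hH' v hv).2.1, fun v hv p hp q hq r hr hpq hpr hqr => ?_⟩
    have hfst : ∀ a ∈ H' v, a.1 = v := (hH' v hv).2.1
    have hadj : ∀ a ∈ H' v, ∀ b ∈ H' v, a ≠ b → (blowupGraph (graphPow G k) t').Adj a b :=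
      fun a ha b hb => blowupGraph_adj_of_fst_eq ((hfst a ha).trans (hfst b hb).symm)
    exact ⟨⟨hadj p hp q hq hpq, hadj p hp r hr hpr, hadj q hq r hr hqr⟩,
      (hH' v hv).2.2 p q r hp hq hr hpq hpr hqr⟩
  obtain ⟨l, hn, hnd, hch⟩ := IsConnectorPath.exists_blue_tightChain ⟨hxV, hxinj, hpath, hw⟩ hC
    fun v hv => by rw [(hH' v hv).1]; omega
  exact exists_injOn_of_tightChain (x 0, ⟨0, ht'_pos⟩) hnd hch hn

/-- Let `ℓ = 17`, `k = 2ℓ`, `t = 8k + 40k² + 5` and let `t'` be a Ramsey number for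
monochromatic `K_t⁽³⁾` in 2-coloured complete 3-uniform hypergraphs on `t'` vertices.
Let `H` be the hypergraph of triangles of the blow-up `G^k(t')`, coloured by `χ`
(`true` = blue), let `V` be a set of vertices of `G` with chosen blue clusters
`H'(v) ⊆ {v} × Fin t'` of size `t` all of whose triples are blue, and let `F` be the
`(2,3)`-graph on `V` whose 2-edges (resp. 3-edges) record blue `(6,6)`-connectors
(resp. `(6,3,6)`-connectors) between clusters.  If `F` contains a `(2,3)`-path on `n`
vertices, then `H` contains a blue tight path on `n` vertices. -/
theorem blue_tight_path_from_23_path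
    (ℓ k t t' : ℕ) (hℓ : ℓ = 17) (hk : k = 2 * ℓ) (ht : t = 8 * k + 40 * k ^ 2 + 5)
    (ht' : ∀ c : Finset (Fin t') → Bool, ∃ (S : Finset (Fin t')) (b : Bool),
      S.card = t ∧ ∀ e ⊆ S, e.card = 3 → c e = b)
    (VG : Type) [DecidableEq VG] (G : SimpleGraph VG)
    (χ : Finset (VG × Fin t') → Bool)
    (V : Set VG) (H' : VG → Finset (VG × Fin t'))
    (hH' : ∀ v ∈ V, (H' v).card = t ∧ (∀ x ∈ H' v, x.1 = v) ∧
      ∀ a b c : VG × Fin t', a ∈ H' v → b ∈ H' v → c ∈ H' v →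
        a ≠ b → a ≠ c → b ≠ c → χ {a, b, c} = true)
    (n : ℕ) (x : ℕ → VG)
    (hxV : ∀ i < n, x i ∈ V) (hxinj : Set.InjOn x (Set.Iio n))
    (w : ℕ → Option VG)
    (hpath : ∀ i, i + 1 < n →
      (w i = none ∧
        Conn66 (blowupGraph (graphPow G k) t') χ (H' (x i)) (H' (x (i + 1)))) ∨
      (∃ z, w i = some z ∧ z ∈ V ∧ (∀ j < n, z ≠ x j) ∧
        Conn636 (blowupGraph (graphPow G k) t') χ (H' (x i)) (H' (x (i + 1))) (H' z)))
    (hw : ∀ i j, i + 1 < n → j + 1 < n → w i ≠ none → w i = w j → i = j) :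
    ∃ f : ℕ → VG × Fin t', Set.InjOn f (Set.Iio n) ∧
      ∀ i, i + 2 < n →
        IsTriangle (blowupGraph (graphPow G k) t') (f i) (f (i + 1)) (f (i + 2)) ∧
        χ {f i, f (i + 1), f (i + 2)} = true :=
  blue_tight_path_from_23_path_general k t t' ht ht' VG G χ V H' hH' n x hxV hxinj w hpath hw
end
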